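/- arXiv:2408.16458 — 3 statements merged into one kernel-verified Lean document; each statement's English description precedes it below -/
import Mathlib

section
/- Let x, y be vectors in F_2^n each of Hamming weight w, and set w* := |x ∧ y|. For integers α, v with 0 ≤ α ≤ v ≤ n and α ≤ w, the number of vectors c of weight v satisfying |x ∧ c| = |y ∧ c| = α equals the sum over e from max(0, 2α − v) to min(α, w*) of C(w*, e) · C(w − w*, α − e)^2 · C(n − 2w + w*, v − 2α + e). -/
open Finset

private lemma zmod2_mul_ne_zero : ∀ a b : ZMod 2, a * b ≠ 0 ↔ a ≠ 0 ∧ b ≠ 0 := by decide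

private lemma zmod2_one_ne_zero : (1 : ZMod 2) ≠ 0 := by decide

private lemma zmod2_one_eq : ∀ a : ZMod 2, a ≠ 0 → (1 : ZMod 2) = a := by decide

/-- Surface area of a spherical wedge: for `x, y` of weight `w` with `w* = |x ∧ y|`,
the number of weight-`v` vectors `c` with `|x ∧ c| = |y ∧ c| = α` equals
`∑_{e = max(0, 2α − v)}^{min(α, w*)} C(w*, e) · C(w − w*, α − e)² · C(n − 2w + w*, v − 2α + e)`. -/
theorem spherical_wedge_card (n w v α : ℕ) (x y : Fin n → ZMod 2)
    (hx : hammingNorm x = w) (hy : hammingNorm y = w)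
    (hαv : α ≤ v) (hvn : v ≤ n) (hαw : α ≤ w) :
    (Finset.univ.filter (fun c : Fin n → ZMod 2 =>
        hammingNorm c = v ∧ hammingNorm (x * c) = α ∧ hammingNorm (y * c) = α)).card
      = ∑ e ∈ Finset.Icc (2 * α - v) (min α (hammingNorm (x * y))),
          (hammingNorm (x * y)).choose e
            * ((w - hammingNorm (x * y)).choose (α - e)) ^ 2
            * ((n - (2 * w - hammingNorm (x * y))).choose (v + e - 2 * α)) := by
  classical
  set X : Finset (Fin n) := univ.filter (fun i => x i ≠ 0) with hXdef
  set Y : Finset (Fin n) := univ.filter (fun i => y i ≠ 0) with hYdef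
  have hXcard : X.card = w := hx
  have hYcard : Y.card = w := hy
  set ws : ℕ := hammingNorm (x * y) with hwsdef
  have hws : (X ∩ Y).card = ws := by
    rw [hwsdef]
    show _ = (univ.filter (fun i => (x * y) i ≠ 0)).card
    congr 1
    ext i
    simp [hXdef, hYdef, zmod2_mul_ne_zero]
  -- support of a vector
  set supp : (Fin n → ZMod 2) → Finset (Fin n) :=
    fun c => univ.filter (fun i => c i ≠ 0) with hsuppdef
  have hnorm : ∀ c : Fin n → ZMod 2, hammingNorm c = (supp c).card := fun _ => rfl
  have hnormx : ∀ c : Fin n → ZMod 2, hammingNorm (x * c) = (X ∩ supp c).card := by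
    intro c
    rw [hnorm]
    congr 1
    ext i
    simp [hXdef, hsuppdef, zmod2_mul_ne_zero]
  have hnormy : ∀ c : Fin n → ZMod 2, hammingNorm (y * c) = (Y ∩ supp c).card := by
    intro c
    rw [hnorm]
    congr 1
    ext i
    simp [hYdef, hsuppdef, zmod2_mul_ne_zero]
  -- step 1: translate to counting finsets
  set P : Finset (Fin n) → Prop :=
    fun S => S.card = v ∧ (X ∩ S).card = α ∧ (Y ∩ S).card = α with hPdef
  have step1 : (Finset.univ.filter (fun c : Fin n → ZMod 2 =>
        hammingNorm c = v ∧ hammingNorm (x * c) = α ∧ hammingNorm (y * c) = α)).card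
      = (Finset.univ.filter P).card := by
    apply card_bij' (fun c _ => supp c)
      (fun S _ => (fun i => if i ∈ S then (1 : ZMod 2) else 0))
    · intro c hc
      simp only [mem_filter, mem_univ, true_and] at hc ⊢
      rw [hPdef]
      exact ⟨by rw [← hnorm]; exact hc.1, by rw [← hnormx]; exact hc.2.1,
        by rw [← hnormy]; exact hc.2.2⟩
    · intro S hS
      simp only [mem_filter, mem_univ, true_and, hPdef] at hS ⊢
      have hsS : supp (fun i => if i ∈ S then (1 : ZMod 2) else 0) = S := by
        rw [hsuppdef]
        ext i
        by_cases h : i ∈ S <;> simp [h, zmod2_one_ne_zero]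
      rw [hnorm, hnormx, hnormy, hsS]
      exact hS
    · intro c hc
      funext i
      by_cases h : c i = 0 <;> simp [hsuppdef, h]
      exact zmod2_one_eq _ h
    · intro S hS
      rw [hsuppdef]
      ext i
      by_cases h : i ∈ S <;> simp [h, zmod2_one_ne_zero]
  rw [step1]
  -- the four parts of the partition
  set A : Finset (Fin n) := X ∩ Y with hA
  set B : Finset (Fin n) := X \ Y with hB
  set C : Finset (Fin n) := Y \ X with hC
  set D : Finset (Fin n) := (X ∪ Y)ᶜ with hD
  have hwsw : ws ≤ w := by
    rw [← hws, ← hXcard]; exact card_le_card inter_subset_left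
  have hAcard : A.card = ws := hws
  have hBcard : B.card = w - ws := by
    have h1 := card_sdiff_add_card_inter X Y
    rw [← hA] at h1
    rw [hB]; omega
  have hCcard : C.card = w - ws := by
    have h1 := card_sdiff_add_card_inter Y X
    rw [inter_comm] at h1
    rw [← hA] at h1
    rw [hC]; omega
  have hDcard : D.card = n - (2 * w - ws) := by
    have h1 : (X ∪ Y).card + (X ∩ Y).card = X.card + Y.card :=
      card_union_add_card_inter X Y
    rw [← hA] at h1
    have h2 : D.card = n - (X ∪ Y).card := by
      simp only [hD, card_compl, Fintype.card_fin]
    have h3 : (X ∪ Y).card ≤ n := by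
      simpa using card_le_univ (X ∪ Y)
    omega
  -- membership characterizations
  have hXm : ∀ i, i ∈ X ↔ x i ≠ 0 := by intro i; simp [hXdef]
  have hYm : ∀ i, i ∈ Y ↔ y i ≠ 0 := by intro i; simp [hYdef]
  have hAm : ∀ i, i ∈ A ↔ (x i ≠ 0 ∧ y i ≠ 0) := by
    intro i; simp [hA, mem_inter, hXm, hYm]
  have hBm : ∀ i, i ∈ B ↔ (x i ≠ 0 ∧ y i = 0) := by
    intro i; simp [hB, mem_sdiff, hXm, hYm]
  have hCm : ∀ i, i ∈ C ↔ (x i = 0 ∧ y i ≠ 0) := by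
    intro i; simp [hC, mem_sdiff, hXm, hYm]; tauto
  have hDm : ∀ i, i ∈ D ↔ (x i = 0 ∧ y i = 0) := by
    intro i; simp [hD, mem_compl, mem_union, hXm, hYm]
  -- step 2: fiberwise counting by e = |A ∩ S|
  have hmaps : ∀ S ∈ Finset.univ.filter P,
      (A ∩ S).card ∈ Finset.Icc (2 * α - v) (min α ws) := by
    intro S hS
    simp only [mem_filter, mem_univ, true_and, hPdef] at hS
    obtain ⟨hSv, hSX, hSY⟩ := hS
    have h1 : (A ∩ S).card ≤ α := by
      rw [← hSX]
      exact card_le_card (inter_subset_inter (by rw [hA]; exact inter_subset_left)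
        (subset_refl S))
    have h2 : (A ∩ S).card ≤ ws := by
      rw [← hAcard]; exact card_le_card inter_subset_left
    have h3 : (X ∩ S) ∩ (Y ∩ S) = A ∩ S := by
      rw [hA]; ext i; simp [mem_inter]
    have h4 : ((X ∩ S) ∪ (Y ∩ S)).card + ((X ∩ S) ∩ (Y ∩ S)).card
        = (X ∩ S).card + (Y ∩ S).card := card_union_add_card_inter _ _
    have h5 : ((X ∩ S) ∪ (Y ∩ S)).card ≤ v := by
      rw [← hSv]
      exact card_le_card (by
        intro i hi
        simp only [mem_union, mem_inter] at hi
        tauto)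
    rw [h3] at h4
    simp only [Finset.mem_Icc, le_min_iff]
    omega
  rw [card_eq_sum_card_fiberwise hmaps]
  -- step 3: compute each fiber
  apply Finset.sum_congr rfl
  intro e he
  simp only [Finset.mem_Icc, le_min_iff] at he
  obtain ⟨helo, heα, hews⟩ := he
  -- the fiber is in bijection with quadruples
  have hfiber : ((Finset.univ.filter P).filter (fun S => (A ∩ S).card = e)).card
      = (A.powersetCard e ×ˢ (B.powersetCard (α - e) ×ˢ
          (C.powersetCard (α - e) ×ˢ D.powersetCard (v + e - 2 * α)))).card := by
    apply card_bij' (fun S _ => (A ∩ S, (B ∩ S, (C ∩ S, D ∩ S))))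
      (fun q _ => q.1 ∪ (q.2.1 ∪ (q.2.2.1 ∪ q.2.2.2)))
    · -- forward map lands in the product
      intro S hS
      simp only [mem_filter, mem_univ, true_and, hPdef] at hS
      obtain ⟨⟨hSv, hSX, hSY⟩, hSe⟩ := hS
      have hXsplit : X ∩ S = (A ∩ S) ∪ (B ∩ S) := by
        ext i; simp only [mem_inter, mem_union, hXm, hAm, hBm]
        by_cases hxi : x i = 0 <;> by_cases hyi : y i = 0 <;> simp [hxi, hyi]
      have hYsplit : Y ∩ S = (A ∩ S) ∪ (C ∩ S) := by
        ext i; simp only [mem_inter, mem_union, hYm, hAm, hCm]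
        by_cases hxi : x i = 0 <;> by_cases hyi : y i = 0 <;> simp [hxi, hyi]
      have hSsplit : S = (A ∩ S) ∪ ((B ∩ S) ∪ ((C ∩ S) ∪ (D ∩ S))) := by
        ext i; simp only [mem_inter, mem_union, hAm, hBm, hCm, hDm]
        by_cases hxi : x i = 0 <;> by_cases hyi : y i = 0 <;> simp [hxi, hyi]
      have dAB : Disjoint (A ∩ S) (B ∩ S) := by
        rw [Finset.disjoint_left]; intro i hi hi'
        simp only [mem_inter, hAm, hBm] at hi hi'; tauto
      have dAC : Disjoint (A ∩ S) (C ∩ S) := by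
        rw [Finset.disjoint_left]; intro i hi hi'
        simp only [mem_inter, hAm, hCm] at hi hi'; tauto
      have dBCD : Disjoint (B ∩ S) ((C ∩ S) ∪ (D ∩ S)) := by
        rw [Finset.disjoint_left]; intro i hi hi'
        simp only [mem_inter, mem_union, hBm, hCm, hDm] at hi hi'; tauto
      have dCD : Disjoint (C ∩ S) (D ∩ S) := by
        rw [Finset.disjoint_left]; intro i hi hi'
        simp only [mem_inter, hCm, hDm] at hi hi'; tauto
      have dABCD : Disjoint (A ∩ S) ((B ∩ S) ∪ ((C ∩ S) ∪ (D ∩ S))) := by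
        rw [Finset.disjoint_left]; intro i hi hi'
        simp only [mem_inter, mem_union, hAm, hBm, hCm, hDm] at hi hi'; tauto
      have hBe : (B ∩ S).card = α - e := by
        have := card_union_of_disjoint dAB
        rw [← hXsplit] at this
        omega
      have hCe : (C ∩ S).card = α - e := by
        have := card_union_of_disjoint dAC
        rw [← hYsplit] at this
        omega
      have hDe : (D ∩ S).card = v + e - 2 * α := by
        have h1 : S.card = (A ∩ S).card + ((B ∩ S).card + ((C ∩ S).card + (D ∩ S).card)) := by
          conv_lhs => rw [hSsplit]
          rw [card_union_of_disjoint dABCD, card_union_of_disjoint dBCD,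
            card_union_of_disjoint dCD]
        omega
      simp only [Finset.mem_product, Finset.mem_powersetCard]
      exact ⟨⟨inter_subset_left, hSe⟩, ⟨inter_subset_left, hBe⟩,
        ⟨inter_subset_left, hCe⟩, ⟨inter_subset_left, hDe⟩⟩
    · -- inverse map lands in the fiber
      intro q hq
      obtain ⟨a, b, c, d⟩ := q
      simp only [Finset.mem_product, Finset.mem_powersetCard] at hq
      obtain ⟨⟨haA, hae⟩, ⟨hbB, hbe⟩, ⟨hcC, hce⟩, ⟨hdD, hde⟩⟩ := hq
      have ham : ∀ i ∈ a, x i ≠ 0 ∧ y i ≠ 0 := fun i hi => (hAm i).mp (haA hi)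
      have hbm : ∀ i ∈ b, x i ≠ 0 ∧ y i = 0 := fun i hi => (hBm i).mp (hbB hi)
      have hcm : ∀ i ∈ c, x i = 0 ∧ y i ≠ 0 := fun i hi => (hCm i).mp (hcC hi)
      have hdm : ∀ i ∈ d, x i = 0 ∧ y i = 0 := fun i hi => (hDm i).mp (hdD hi)
      have dab : Disjoint a b := by
        rw [Finset.disjoint_left]; intro i hi hi'
        exact absurd (hbm i hi').2 (fun h => (ham i hi).2 h)
      have dcd : Disjoint c d := by
        rw [Finset.disjoint_left]; intro i hi hi'
        exact absurd (hdm i hi').2 (fun h => (hcm i hi).2 h)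
      have dbcd : Disjoint b (c ∪ d) := by
        rw [Finset.disjoint_left]; intro i hi hi'
        rcases mem_union.mp hi' with h | h
        · exact absurd (hcm i h).1 (fun h2 => (hbm i hi).1 h2)
        · exact absurd (hdm i h).1 (fun h2 => (hbm i hi).1 h2)
      have dabcd : Disjoint a (b ∪ (c ∪ d)) := by
        rw [Finset.disjoint_left]; intro i hi hi'
        rcases mem_union.mp hi' with h | h
        · exact absurd (hbm i h).2 (fun h2 => (ham i hi).2 h2)
        · rcases mem_union.mp h with h' | h'
          · exact absurd (hcm i h').1 (fun h2 => (ham i hi).1 h2)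
          · exact absurd (hdm i h').1 (fun h2 => (ham i hi).1 h2)
      have hcardU : (a ∪ (b ∪ (c ∪ d))).card = v := by
        rw [card_union_of_disjoint dabcd, card_union_of_disjoint dbcd,
          card_union_of_disjoint dcd, hae, hbe, hce, hde]
        omega
      have hXU : X ∩ (a ∪ (b ∪ (c ∪ d))) = a ∪ b := by
        ext i
        simp only [mem_inter, mem_union, hXm]
        constructor
        · rintro ⟨hxi, hi⟩
          rcases hi with h | h | h | h
          · exact Or.inl h
          · exact Or.inr h
          · exact absurd (hcm i h).1 (fun h2 => hxi h2)
          · exact absurd (hdm i h).1 (fun h2 => hxi h2)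
        · rintro (h | h)
          · exact ⟨(ham i h).1, Or.inl h⟩
          · exact ⟨(hbm i h).1, Or.inr (Or.inl h)⟩
      have hYU : Y ∩ (a ∪ (b ∪ (c ∪ d))) = a ∪ c := by
        ext i
        simp only [mem_inter, mem_union, hYm]
        constructor
        · rintro ⟨hyi, hi⟩
          rcases hi with h | h | h | h
          · exact Or.inl h
          · exact absurd (hbm i h).2 (fun h2 => hyi h2)
          · exact Or.inr h
          · exact absurd (hdm i h).2 (fun h2 => hyi h2)
        · rintro (h | h)
          · exact ⟨(ham i h).2, Or.inl h⟩
          · exact ⟨(hcm i h).2, Or.inr (Or.inr (Or.inl h))⟩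
      have hAU : A ∩ (a ∪ (b ∪ (c ∪ d))) = a := by
        ext i
        simp only [mem_inter, mem_union, hAm]
        constructor
        · rintro ⟨⟨hxi, hyi⟩, hi⟩
          rcases hi with h | h | h | h
          · exact h
          · exact absurd (hbm i h).2 (fun h2 => hyi h2)
          · exact absurd (hcm i h).1 (fun h2 => hxi h2)
          · exact absurd (hdm i h).1 (fun h2 => hxi h2)
        · intro h
          exact ⟨(ham i h), Or.inl h⟩
      have dac : Disjoint a c := by
        rw [Finset.disjoint_left]; intro i hi hi'
        exact absurd (hcm i hi').1 (fun h => (ham i hi).1 h)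
      simp only [mem_filter, mem_univ, true_and, hPdef]
      refine ⟨⟨hcardU, ?_, ?_⟩, ?_⟩
      · rw [hXU, card_union_of_disjoint dab, hae, hbe]; omega
      · rw [hYU, card_union_of_disjoint dac, hae, hce]; omega
      · rw [hAU, hae]
    · -- left inverse
      intro S hS
      simp only [mem_filter, mem_univ, true_and, hPdef] at hS
      obtain ⟨⟨hSv, hSX, hSY⟩, hSe⟩ := hS
      ext i
      simp only [mem_union, mem_inter, hAm, hBm, hCm, hDm]
      by_cases hxi : x i = 0 <;> by_cases hyi : y i = 0 <;> simp [hxi, hyi]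
    · -- right inverse
      intro q hq
      obtain ⟨a, b, c, d⟩ := q
      simp only [Finset.mem_product, Finset.mem_powersetCard] at hq
      obtain ⟨⟨haA, hae⟩, ⟨hbB, hbe⟩, ⟨hcC, hce⟩, ⟨hdD, hde⟩⟩ := hq
      have ham : ∀ i ∈ a, x i ≠ 0 ∧ y i ≠ 0 := fun i hi => (hAm i).mp (haA hi)
      have hbm : ∀ i ∈ b, x i ≠ 0 ∧ y i = 0 := fun i hi => (hBm i).mp (hbB hi)
      have hcm : ∀ i ∈ c, x i = 0 ∧ y i ≠ 0 := fun i hi => (hCm i).mp (hcC hi)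
      have hdm : ∀ i ∈ d, x i = 0 ∧ y i = 0 := fun i hi => (hDm i).mp (hdD hi)
      have hAU : A ∩ (a ∪ (b ∪ (c ∪ d))) = a := by
        ext i
        simp only [mem_inter, mem_union, hAm]
        constructor
        · rintro ⟨⟨hxi, hyi⟩, hi⟩
          rcases hi with h | h | h | h
          · exact h
          · exact absurd (hbm i h).2 (fun h2 => hyi h2)
          · exact absurd (hcm i h).1 (fun h2 => hxi h2)
          · exact absurd (hdm i h).1 (fun h2 => hxi h2)
        · intro h; exact ⟨ham i h, Or.inl h⟩
      have hBU : B ∩ (a ∪ (b ∪ (c ∪ d))) = b := by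
        ext i
        simp only [mem_inter, mem_union, hBm]
        constructor
        · rintro ⟨⟨hxi, hyi⟩, hi⟩
          rcases hi with h | h | h | h
          · exact absurd hyi (fun _ => (ham i h).2 hyi)
          · exact h
          · exact absurd (hcm i h).1 (fun h2 => hxi h2)
          · exact absurd (hdm i h).1 (fun h2 => hxi h2)
        · intro h; exact ⟨hbm i h, Or.inr (Or.inl h)⟩
      have hCU : C ∩ (a ∪ (b ∪ (c ∪ d))) = c := by
        ext i
        simp only [mem_inter, mem_union, hCm]
        constructor
        · rintro ⟨⟨hxi, hyi⟩, hi⟩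
          rcases hi with h | h | h | h
          · exact absurd (ham i h).1 (fun h2 => h2 hxi)
          · exact absurd (hbm i h).1 (fun h2 => h2 hxi)
          · exact h
          · exact absurd (hdm i h).2 (fun h2 => hyi h2)
        · intro h; exact ⟨hcm i h, Or.inr (Or.inr (Or.inl h))⟩
      have hDU : D ∩ (a ∪ (b ∪ (c ∪ d))) = d := by
        ext i
        simp only [mem_inter, mem_union, hDm]
        constructor
        · rintro ⟨⟨hxi, hyi⟩, hi⟩
          rcases hi with h | h | h | h
          · exact absurd (ham i h).1 (fun h2 => h2 hxi)
          · exact absurd (hbm i h).1 (fun h2 => h2 hxi)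
          · exact absurd (hcm i h).2 (fun h2 => h2 hyi)
          · exact h
        · intro h; exact ⟨hdm i h, Or.inr (Or.inr (Or.inr h))⟩
      simp only [Prod.mk.injEq]
      exact ⟨hAU, hBU, hCU, hDU⟩
  rw [hfiber]
  simp only [Finset.card_product, Finset.card_powersetCard, hAcard, hBcard, hCcard, hDcard]
  ring
end

section
/- Let x, y be uniform and independent on the weight-w sphere in F_2^n (w even), and fix a weight-v vector c. Then the conditional probability that |x ∧ y| = w/2, given |x ∧ c| = α and |y ∧ c| = α, equals [C(w, w/2) · C(n−w, w/2) / (C(v, α) · C(n−v, w−α) · C(w, α) · C(n−w, v−α))] · |W_{v,α}^n(x', y')|, where x', y' are arbitrary weight-w vectors with |x' + y'| = w. -/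
/-!
Double count the triples `(x, y, c')` with `|x| = |y| = w`, `|x ∧ y| = w/2`, `|c'| = v` and
`|x ∧ c'| = |y ∧ c'| = α`. Coordinate permutations act transitively on vectors of a given
weight and on pairs `(x, y)` with given `|x|, |y|, |x ∧ y|`, so both fibre counts are constant,
and `C(n,v) · #(solutions in the bucket of c) = #(solution pairs) · |W_{v,α}(x', y')|`.
The bucket is a product of two sets of size `C(v,α) C(n-v,w-α)`, and the identity
`C(n,w) C(w,α) C(n-w,v-α) = C(n,v) C(v,α) C(n-v,w-α)` (double counting again) turns the ratio
into the stated formula.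
-/

open Finset

section

variable {ι : Type*} [Fintype ι]

theorem hammingNorm_comp_equiv {ι' β : Type*} [Fintype ι'] [Zero β] [DecidableEq β]
    (x : ι → β) (σ : ι' ≃ ι) : hammingNorm (x ∘ σ) = hammingNorm x := by
  simp only [hammingNorm, card_filter]
  exact σ.sum_comp fun i => if x i ≠ 0 then 1 else 0

theorem hammingNorm_eq_sum_val (x : ι → ZMod 2) : hammingNorm x = ∑ i, (x i).val := by
  rw [hammingNorm, card_filter]
  exact sum_congr rfl fun i _ => by generalize x i = a; revert a; decide

theorem hammingNorm_add_add_two_mul_hammingNorm_mul (x y : ι → ZMod 2) :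
    hammingNorm (x + y) + 2 * hammingNorm (x * y) = hammingNorm x + hammingNorm y := by
  simp only [hammingNorm_eq_sum_val, mul_sum, ← sum_add_distrib, Pi.add_apply, Pi.mul_apply]
  exact sum_congr rfl fun i _ => by
    generalize x i = a; generalize y i = b; revert a b; decide

/-- Writing `[u = a] = (1 - a) + (2a - 1) u` for bits `u, a`, the number of coordinates where
`(x, y)` takes a given value is a fixed combination of `|ι|`, `|x|`, `|y|` and `|x ∧ y|`. -/
theorem natCast_card_filter_eq_pair (x y : ι → ZMod 2) (a b : ZMod 2) :
    (#{i | (x i, y i) = (a, b)} : ℤ)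
      = (1 - a.val) * (1 - b.val) * Fintype.card ι
        + (2 * a.val - 1) * (1 - b.val) * hammingNorm x
        + (1 - a.val) * (2 * b.val - 1) * hammingNorm y
        + (2 * a.val - 1) * (2 * b.val - 1) * hammingNorm (x * y) := by
  have key : ∀ u v : ZMod 2, (if (u, v) = (a, b) then 1 else 0 : ℤ)
      = (1 - a.val) * (1 - b.val) + (2 * a.val - 1) * (1 - b.val) * u.val
        + (1 - a.val) * (2 * b.val - 1) * v.val
        + (2 * a.val - 1) * (2 * b.val - 1) * (u * v).val := by
    revert a b; decide
  simp only [natCast_card_filter, key, hammingNorm_eq_sum_val, sum_add_distrib, ← mul_sum,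
    sum_const, card_univ, Pi.mul_apply]
  push_cast
  ring

theorem exists_perm_comp_eq_of_card_fiber_eq {β : Type*} [DecidableEq β] {f g : ι → β}
    (h : ∀ b, #{i | f i = b} = #{i | g i = b}) : ∃ σ : Equiv.Perm ι, f ∘ σ = g := by
  have e : ∀ b, {i // g i = b} ≃ {i // f i = b} := fun b =>
    Fintype.equivOfCardEq (by simp only [Fintype.card_subtype, h])
  exact ⟨(Equiv.sigmaFiberEquiv g).symm.trans
    ((Equiv.sigmaCongrRight e).trans (Equiv.sigmaFiberEquiv f)),
    funext fun i => (e (g i) ⟨i, rfl⟩).2⟩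

theorem exists_perm_comp_eq_of_hammingNorm_eq {x₁ y₁ x₂ y₂ : ι → ZMod 2}
    (hx : hammingNorm x₁ = hammingNorm x₂) (hy : hammingNorm y₁ = hammingNorm y₂)
    (hxy : hammingNorm (x₁ * y₁) = hammingNorm (x₂ * y₂)) :
    ∃ σ : Equiv.Perm ι, x₁ ∘ σ = x₂ ∧ y₁ ∘ σ = y₂ := by
  obtain ⟨σ, hσ⟩ := exists_perm_comp_eq_of_card_fiber_eq
    (f := fun i => (x₁ i, y₁ i)) (g := fun i => (x₂ i, y₂ i)) fun ⟨a, b⟩ => by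
      have h₁ := natCast_card_filter_eq_pair x₁ y₁ a b
      have h₂ := natCast_card_filter_eq_pair x₂ y₂ a b
      rw [hx, hy, hxy, ← h₂] at h₁
      exact_mod_cast h₁
  exact ⟨σ, funext fun i => congr_arg Prod.fst (congr_fun hσ i),
    funext fun i => congr_arg Prod.snd (congr_fun hσ i)⟩

theorem card_filter_and_eq_card_mul {α β : Type*} [Fintype α] [Fintype β] (p : α → Prop)
    (r : α → β → Prop) [DecidablePred p] [∀ a, DecidablePred (r a)] {k : ℕ}
    (h : ∀ a, p a → #{b | r a b} = k) :
    #{q : α × β | p q.1 ∧ r q.1 q.2} = #{a | p a} * k := by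
  rw [card_filter, Fintype.sum_prod_type, card_filter, sum_mul]
  refine sum_congr rfl fun a _ => ?_
  by_cases ha : p a
  · simp only [ha, true_and, if_true, one_mul, ← card_filter, h a ha]
  · simp [ha]

variable [DecidableEq ι]

variable (ι) in
def hammingSphere (w : ℕ) : Finset (ι → ZMod 2) := {x | hammingNorm x = w}

theorem card_hammingSphere (w : ℕ) : #(hammingSphere ι w) = (Fintype.card ι).choose w := by
  rw [← card_univ, ← card_powersetCard]
  refine card_nbij' (fun x => ({i | x i ≠ 0} : Finset ι)) (fun s i => if i ∈ s then 1 else 0)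
    ?_ ?_ ?_ ?_
  · intro x hx
    rw [mem_coe, mem_powersetCard]
    exact ⟨subset_univ _, (mem_filter.1 (mem_coe.1 hx)).2⟩
  · intro s hs
    rw [mem_coe, mem_powersetCard] at hs
    simp [hammingSphere, hammingNorm, hs]
  · intro x _
    funext i
    simp only [mem_filter, mem_univ, true_and]
    generalize x i = a; revert a; decide
  · intro s _
    ext i
    simp

theorem card_filter_hammingNorm_mul_eq (c : ι → ZMod 2) {w α : ℕ} (hαw : α ≤ w) :
    #{y ∈ hammingSphere ι w | hammingNorm (y * c) = α}
      = (hammingNorm c).choose α * (Fintype.card ι - hammingNorm c).choose (w - α) := by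
  set e := Equiv.piEquivPiSubtypeProd (fun i => c i ≠ 0) fun _ => ZMod 2
  have hsplit : ∀ y, hammingNorm y = hammingNorm (e y).1 + hammingNorm (e y).2 := fun y => by
    simp only [hammingNorm_eq_sum_val]
    exact (Fintype.sum_subtype_add_sum_subtype _ _).symm
  have hmul : ∀ y, hammingNorm (y * c) = hammingNorm (e y).1 := fun y => by
    have on_supp : ∀ a b : ZMod 2, b ≠ 0 → (a * b).val = a.val := by decide
    have off_supp : ∀ a b : ZMod 2, ¬b ≠ 0 → (a * b).val = 0 := by decide
    simp only [hammingNorm_eq_sum_val, Pi.mul_apply]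
    rw [← Fintype.sum_subtype_add_sum_subtype fun i => c i ≠ 0]
    exact (congr_arg₂ (· + ·) (sum_congr rfl fun i _ => on_supp _ _ i.2)
      (sum_eq_zero fun i _ => off_supp _ _ i.2)).trans (add_zero _)
  calc #{y ∈ hammingSphere ι w | hammingNorm (y * c) = α}
      = #(hammingSphere _ α ×ˢ hammingSphere _ (w - α)) := card_equiv e fun y => by
        simp only [hammingSphere, mem_filter, mem_univ, true_and, mem_product]
        rw [hmul, hsplit]
        omega
    _ = _ := by
      rw [card_product, card_hammingSphere, card_hammingSphere,
        Fintype.card_subtype_compl fun i => c i ≠ 0, Fintype.card_subtype]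
      rfl

variable (ι) in
/-- For `|x| = |y| = w`, the condition `2 |x ∧ y| = w` says `|x + y| = w`. -/
def solutionPairs (w : ℕ) : Finset ((ι → ZMod 2) × (ι → ZMod 2)) :=
  {p | hammingNorm p.1 = w ∧ hammingNorm p.2 = w ∧ 2 * hammingNorm (p.1 * p.2) = w}

def bucket (w α : ℕ) (c : ι → ZMod 2) : Finset ((ι → ZMod 2) × (ι → ZMod 2)) :=
  {p | hammingNorm p.1 = w ∧ hammingNorm p.2 = w ∧
    hammingNorm (p.1 * c) = α ∧ hammingNorm (p.2 * c) = α}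

def bucketSolutions (w α : ℕ) (c : ι → ZMod 2) :
    Finset ((ι → ZMod 2) × (ι → ZMod 2)) :=
  {p | hammingNorm p.1 = w ∧ hammingNorm p.2 = w ∧
    hammingNorm (p.1 * c) = α ∧ hammingNorm (p.2 * c) = α ∧ 2 * hammingNorm (p.1 * p.2) = w}

def wedge (v α : ℕ) (x y : ι → ZMod 2) : Finset (ι → ZMod 2) :=
  {c | hammingNorm c = v ∧ hammingNorm (x * c) = α ∧ hammingNorm (y * c) = α}

theorem card_solutionPairs {w : ℕ} (hw : Even w) :
    #(solutionPairs ι w)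
      = (Fintype.card ι).choose w * (w.choose (w / 2) * (Fintype.card ι - w).choose (w / 2)) := by
  rw [solutionPairs, card_filter_and_eq_card_mul (fun x => hammingNorm x = w)
    (fun x y => hammingNorm y = w ∧ 2 * hammingNorm (x * y) = w) fun x hx => ?_]
  · exact congr_arg (· * _) (card_hammingSphere w)
  have hw2 : w - w / 2 = w / 2 := by rcases hw with ⟨k, rfl⟩; omega
  calc #{y | hammingNorm y = w ∧ 2 * hammingNorm (x * y) = w}
      = #{y ∈ hammingSphere ι w | hammingNorm (y * x) = w / 2} := by
        rw [hammingSphere, filter_filter]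
        refine congr_arg card (filter_congr fun y _ => ?_)
        rw [mul_comm x]
        omega
    _ = _ := by rw [card_filter_hammingNorm_mul_eq x (Nat.div_le_self _ 2), hx, hw2]

theorem card_bucket (w α : ℕ) (c : ι → ZMod 2) :
    #(bucket w α c) = #{y ∈ hammingSphere ι w | hammingNorm (y * c) = α} ^ 2 := by
  rw [sq, ← card_product]
  congr 1
  ext p
  simp only [bucket, hammingSphere, mem_filter, mem_univ, true_and, mem_product]
  tauto

theorem card_bucketSolutions_congr {w α : ℕ} {c₁ c₂ : ι → ZMod 2}
    (h : hammingNorm c₁ = hammingNorm c₂) :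
    #(bucketSolutions w α c₁) = #(bucketSolutions w α c₂) := by
  obtain ⟨σ, rfl, -⟩ :=
    exists_perm_comp_eq_of_hammingNorm_eq (y₁ := 0) (y₂ := 0) h rfl (by simp)
  let e : (ι → ZMod 2) ≃ (ι → ZMod 2) := σ.symm.arrowCongr (.refl _)
  have he : ∀ x, e x = x ∘ σ := fun _ => rfl
  refine card_equiv (e.prodCongr e) fun p => ?_
  simp only [bucketSolutions, mem_filter, mem_univ, true_and, Equiv.prodCongr_apply,
    Prod.map_fst, Prod.map_snd, he, ← Pi.mul_comp, hammingNorm_comp_equiv]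

theorem card_wedge_congr {v α : ℕ} {x₁ y₁ x₂ y₂ : ι → ZMod 2}
    (hx : hammingNorm x₁ = hammingNorm x₂) (hy : hammingNorm y₁ = hammingNorm y₂)
    (hxy : hammingNorm (x₁ * y₁) = hammingNorm (x₂ * y₂)) :
    #(wedge v α x₁ y₁) = #(wedge v α x₂ y₂) := by
  obtain ⟨σ, rfl, rfl⟩ := exists_perm_comp_eq_of_hammingNorm_eq hx hy hxy
  let e : (ι → ZMod 2) ≃ (ι → ZMod 2) := σ.symm.arrowCongr (.refl _)
  have he : ∀ x, e x = x ∘ σ := fun _ => rfl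
  refine card_equiv e fun c => ?_
  simp only [wedge, mem_filter, mem_univ, true_and, he, ← Pi.mul_comp, hammingNorm_comp_equiv]

theorem card_hammingSphere_mul_card_bucketSolutions {w v α : ℕ} {c x y : ι → ZMod 2}
    (hc : hammingNorm c = v) (hxy : (x, y) ∈ solutionPairs ι w) :
    #(hammingSphere ι v) * #(bucketSolutions w α c)
      = #(solutionPairs ι w) * #(wedge v α x y) := by
  refine card_mul_eq_card_mul (fun c' p => hammingNorm (p.1 * c') = α ∧
    hammingNorm (p.2 * c') = α) (fun c' hc' => ?_) fun p hp => ?_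
  · rw [bipartiteAbove, solutionPairs, filter_filter,
      ← card_bucketSolutions_congr ((mem_filter.1 hc').2.trans hc.symm), bucketSolutions]
    refine congr_arg card (filter_congr fun p _ => ?_)
    tauto
  · rw [bipartiteBelow, hammingSphere, filter_filter]
    simp only [solutionPairs, mem_filter, mem_univ, true_and] at hp hxy
    exact card_wedge_congr (hp.1.trans hxy.1.symm) (hp.2.1.trans hxy.2.1.symm) (by omega)

/-- Both sides count the pairs `(x, c)` with `|x| = w`, `|c| = v` and `|x ∧ c| = α`. -/
theorem Nat.choose_mul_choose_mul_choose_sub_comm (n : ℕ) {w v α : ℕ} (hαw : α ≤ w)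
    (hαv : α ≤ v) :
    n.choose w * (w.choose α * (n - w).choose (v - α))
      = n.choose v * (v.choose α * (n - v).choose (w - α)) := by
  have h := card_mul_eq_card_mul (fun (x c : Fin n → ZMod 2) => hammingNorm (x * c) = α)
    (s := hammingSphere _ w) (t := hammingSphere _ v) (m := w.choose α * (n - w).choose (v - α))
    (n := v.choose α * (n - v).choose (w - α)) (fun x hx => ?_) fun c hc => ?_
  · simpa only [card_hammingSphere, Fintype.card_fin] using h
  · simp_rw [bipartiteAbove, mul_comm x, card_filter_hammingNorm_mul_eq x hαv,
      (mem_filter.1 hx).2, Fintype.card_fin]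
  · rw [bipartiteBelow, card_filter_hammingNorm_mul_eq c hαw, (mem_filter.1 hc).2,
      Fintype.card_fin]

theorem div_mul_self_eq_div_mul_mul {K : Type*} [Field K] {N W Q A B m k : K} (hm : m ≠ 0)
    (hN : m * N = k * Q * W) (hk : k * A = m * B) :
    N / (B * B) = Q / (B * A) * W := by
  rcases eq_or_ne B 0 with rfl | hB
  · simp
  have hA : A ≠ 0 := by
    rintro rfl
    exact mul_ne_zero hm hB (by simpa using hk.symm)
  rw [div_mul_eq_mul_div, div_eq_div_iff (mul_ne_zero hB hB) (mul_ne_zero hB hA)]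
  refine mul_left_cancel₀ hm ?_
  linear_combination B * A * hN + Q * W * B * hk

end

theorem cond_prob_solution_given_bucket_general (n w v α : ℕ) (hw : Even w)
    (hαv : α ≤ v) (hvn : v ≤ n) (hαw : α ≤ w)
    (c : Fin n → ZMod 2) (hc : hammingNorm c = v)
    (x' y' : Fin n → ZMod 2) (hx' : hammingNorm x' = w) (hy' : hammingNorm y' = w)
    (hxy' : hammingNorm (x' + y') = w) :
    ((Finset.univ.filter (fun p : (Fin n → ZMod 2) × (Fin n → ZMod 2) =>
        hammingNorm p.1 = w ∧ hammingNorm p.2 = w ∧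
          hammingNorm (p.1 * c) = α ∧ hammingNorm (p.2 * c) = α ∧
          2 * hammingNorm (p.1 * p.2) = w)).card : ℚ)
      / ((Finset.univ.filter (fun p : (Fin n → ZMod 2) × (Fin n → ZMod 2) =>
        hammingNorm p.1 = w ∧ hammingNorm p.2 = w ∧
          hammingNorm (p.1 * c) = α ∧ hammingNorm (p.2 * c) = α)).card : ℚ)
    = ((w.choose (w / 2) * (n - w).choose (w / 2) : ℚ)
          / ((v.choose α : ℚ) * ((n - v).choose (w - α) : ℚ)
              * (w.choose α : ℚ) * ((n - w).choose (v - α) : ℚ)))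
        * ((Finset.univ.filter (fun c' : Fin n → ZMod 2 =>
            hammingNorm c' = v ∧ hammingNorm (x' * c') = α ∧
              hammingNorm (y' * c') = α)).card : ℚ) := by
  have hsol : (x', y') ∈ solutionPairs (Fin n) w := by
    have := hammingNorm_add_add_two_mul_hammingNorm_mul x' y'
    simp only [solutionPairs, mem_filter, mem_univ, true_and]
    omega
  have hcount := card_hammingSphere_mul_card_bucketSolutions (α := α) hc hsol
  rw [card_hammingSphere, card_solutionPairs hw, Fintype.card_fin] at hcount
  have hbucket := card_bucket w α c
  rw [card_filter_hammingNorm_mul_eq c hαw, hc, Fintype.card_fin, sq] at hbucket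
  change (#(bucketSolutions w α c) : ℚ) / #(bucket w α c) = _ * #(wedge v α x' y')
  rw [hbucket, mul_assoc _ (w.choose α : ℚ)]
  push_cast
  exact div_mul_self_eq_div_mul_mul (k := (n.choose w : ℚ))
    (Nat.cast_ne_zero.2 (Nat.choose_pos hvn).ne') (by exact_mod_cast hcount)
    (by exact_mod_cast Nat.choose_mul_choose_mul_choose_sub_comm n hαw hαv)

/-- For `x, y` independent uniform on the weight-`w` sphere (`w` even) and a fixed
weight-`v` vector `c`, the conditional probability that `|x ∧ y| = w/2`, given
`|x ∧ c| = α` and `|y ∧ c| = α`, equals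
`[C(w,w/2)·C(n−w,w/2) / (C(v,α)·C(n−v,w−α)·C(w,α)·C(n−w,v−α))] · |W_{v,α}^n(x',y')|`
for arbitrary weight-`w` vectors `x', y'` with `|x' + y'| = w`. -/
theorem cond_prob_solution_given_bucket (n w v α : ℕ) (hw : Even w) (hwn : w ≤ n)
    (hαv : α ≤ v) (hvn : v ≤ n) (hαw : α ≤ w)
    (c : Fin n → ZMod 2) (hc : hammingNorm c = v)
    (x' y' : Fin n → ZMod 2) (hx' : hammingNorm x' = w) (hy' : hammingNorm y' = w)
    (hxy' : hammingNorm (x' + y') = w) :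
    ((Finset.univ.filter (fun p : (Fin n → ZMod 2) × (Fin n → ZMod 2) =>
        hammingNorm p.1 = w ∧ hammingNorm p.2 = w ∧
          hammingNorm (p.1 * c) = α ∧ hammingNorm (p.2 * c) = α ∧
          2 * hammingNorm (p.1 * p.2) = w)).card : ℚ)
      / ((Finset.univ.filter (fun p : (Fin n → ZMod 2) × (Fin n → ZMod 2) =>
        hammingNorm p.1 = w ∧ hammingNorm p.2 = w ∧
          hammingNorm (p.1 * c) = α ∧ hammingNorm (p.2 * c) = α)).card : ℚ)
    = ((w.choose (w / 2) * (n - w).choose (w / 2) : ℚ)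
          / ((v.choose α : ℚ) * ((n - v).choose (w - α) : ℚ)
              * (w.choose α : ℚ) * ((n - w).choose (v - α) : ℚ)))
        * ((Finset.univ.filter (fun c' : Fin n → ZMod 2 =>
            hammingNorm c' = v ∧ hammingNorm (x' * c') = α ∧
              hammingNorm (y' * c') = α)).card : ℚ) :=
  cond_prob_solution_given_bucket_general n w v α hw hαv hvn hαw c hc x' y' hx' hy' hxy'
end

section
/- Let p₁, q₂, p ∈ (0,1] and let N₀, N₁, …, N_m be positive reals satisfying N_i ≤ N_{i−1}^2 · p for all 1 ≤ i ≤ m, where m ≥ 1. Let N_max := max_i N_i. Then N_max / sqrt(N_m) ≥ 1 / sqrt(p). -/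
/-- Varying list sizes cannot beat the sieving list-size barrier: if
`N_i ≤ N_{i−1}² · p` for `1 ≤ i ≤ m` with all `N_i > 0`, then
`N_max / sqrt(N_m) ≥ 1 / sqrt(p)`. -/
theorem list_size_barrier (p₁ q₂ p : ℝ)
    (hp₁ : 0 < p₁) (hp₁1 : p₁ ≤ 1) (hq₂ : 0 < q₂) (hq₂1 : q₂ ≤ 1)
    (hp : 0 < p) (hp1 : p ≤ 1)
    (m : ℕ) (hm : 1 ≤ m) (N : ℕ → ℝ) (hpos : ∀ i, i ≤ m → 0 < N i)
    (hrec : ∀ i, 1 ≤ i → i ≤ m → N i ≤ (N (i - 1)) ^ 2 * p) :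
    1 / Real.sqrt p ≤
      ((Finset.range (m + 1)).sup' (Finset.nonempty_range_iff.mpr (Nat.succ_ne_zero m))
          fun i => N i) / Real.sqrt (N m) := by
  have hNm1 : 0 < N (m - 1) := hpos _ (Nat.sub_le _ _)
  have hsup : N (m - 1) ≤
      (Finset.range (m + 1)).sup' (Finset.nonempty_range_iff.mpr (Nat.succ_ne_zero m))
        fun i => N i :=
    Finset.le_sup' _ (Finset.mem_range.mpr (by omega))
  have hs : Real.sqrt (N m) ≤ N (m - 1) * Real.sqrt p := by
    calc Real.sqrt (N m) ≤ Real.sqrt ((N (m - 1)) ^ 2 * p) :=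
          Real.sqrt_le_sqrt (hrec m hm le_rfl)
      _ = N (m - 1) * Real.sqrt p := by
          rw [Real.sqrt_mul (by positivity), Real.sqrt_sq hNm1.le]
  rw [div_le_div_iff₀ (Real.sqrt_pos.mpr hp) (Real.sqrt_pos.mpr (hpos m le_rfl)), one_mul]
  calc Real.sqrt (N m) ≤ N (m - 1) * Real.sqrt p := hs
    _ ≤ _ := mul_le_mul_of_nonneg_right hsup (Real.sqrt_nonneg p)
end
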